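/- For a sequence α ∈ {0,1}^∞, let λ_m be the proportion of zeros among α_1,...,α_m, and let λ̄ = limsup λ_m, λ̲ = liminf λ_m. Then the lower box dimension of K_α equals λ̄·log_5(13) + (1−λ̄)·log_5(44) and the upper box dimension of K_α equals λ̲·log_5(13) + (1−λ̲)·log_5(44). -/

import Mathlib

open Pointwise

noncomputable section

/-- `ℝ^k` with the Euclidean metric. -/
abbrev E (k : ℕ) := EuclideanSpace ℝ (Fin k)

/-- Points of `ℝ^k` all of whose coordinates are integers in `{0, …, n-1}`. -/
def digits (n k : ℕ) : Set (E k) := {x | ∀ i, ∃ m : ℕ, m < n ∧ x i = m}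

/-- The unit cube `[0,1]^k`. -/
def unitCube (k : ℕ) : Set (E k) := {x | ∀ i, x i ∈ Set.Icc (0:ℝ) 1}

/-- The Hutchinson operator `A ↦ (A + D b)/5` on subsets of `ℝ³`,
for a pair of digit sets `D false = D₀`, `D true = D₁`. -/
def Ttil (D : Bool → Set (E 3)) (b : Bool) (A : Set (E 3)) : Set (E 3) :=
  (5:ℝ)⁻¹ • (A + D b)

/-- `F_w = T_{w₁} ∘ … ∘ T_{w_k} ([0,1]³)` for a finite binary word `w`. -/
def Fword (D : Bool → Set (E 3)) (w : List Bool) : Set (E 3) :=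
  w.foldr (fun b A => Ttil D b A) (unitCube 3)

/-- Length of the longest common prefix of two words. -/
def lcp : List Bool → List Bool → ℕ
  | a :: as, b :: bs => if a = b then lcp as bs + 1 else 0
  | _, _ => 0

/-- The length-`k` initial segment of an infinite binary sequence. -/
def prefixList (α : ℕ → Bool) (k : ℕ) : List Bool := List.ofFn (fun i : Fin k => α i)

/-- `K_α = ⋂_{k≥1} T_{α₁} ∘ … ∘ T_{α_k}([0,1]³)`. -/
def Kset (D : Bool → Set (E 3)) (α : ℕ → Bool) : Set (E 3) :=
  ⋂ k : ℕ, Fword D (prefixList α (k + 1))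

/-- The "cross" digit set `D₀`: the 13 points `(2,2,j), (2,j,2), (j,2,2)`, `j ∈ {0,…,4}`. -/
def crossD : Set (E 3) :=
  {x | ∃ j : ℕ, j ≤ 4 ∧ (x = ![2, 2, (j:ℝ)] ∨ x = ![2, (j:ℝ), 2] ∨ x = ![(j:ℝ), 2, 2])}

/-- The "frame" digit set `D₁`: the 44 points of `{0,…,4}³` having at least two
coordinates in `{0,4}`. -/
def frameD : Set (E 3) :=
  {x | ∃ a b c : ℕ, a ≤ 4 ∧ b ≤ 4 ∧ c ≤ 4 ∧ x = ![(a:ℝ), (b:ℝ), (c:ℝ)] ∧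
    ((a ∈ ({0,4} : Set ℕ) ∧ b ∈ ({0,4} : Set ℕ)) ∨
     (a ∈ ({0,4} : Set ℕ) ∧ c ∈ ({0,4} : Set ℕ)) ∨
     (b ∈ ({0,4} : Set ℕ) ∧ c ∈ ({0,4} : Set ℕ)))}

/-- The pair of digit sets of the paper: `D false = D₀` (cross), `D true = D₁` (frame). -/
def paperD : Bool → Set (E 3) := fun b => if b then frameD else crossD

/-- The least number of balls of radius `δ` needed to cover `s`. -/
def coverNumber (s : Set (E 3)) (δ : ℝ) : ℕ :=
  sInf {m | ∃ t : Finset (E 3), t.card = m ∧ s ⊆ ⋃ x ∈ t, Metric.ball x δ}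

/-- Lower box dimension, computed via covering numbers at the scales `δ = 5^{-k}`. -/
def lowerBoxDim (s : Set (E 3)) : ℝ :=
  Filter.liminf (fun k : ℕ => Real.log (coverNumber s (1 / 5 ^ k)) / ((k : ℝ) * Real.log 5))
    Filter.atTop

/-- Upper box dimension, computed via covering numbers at the scales `δ = 5^{-k}`. -/
def upperBoxDim (s : Set (E 3)) : ℝ :=
  Filter.limsup (fun k : ℕ => Real.log (coverNumber s (1 / 5 ^ k)) / ((k : ℝ) * Real.log 5))
    Filter.atTop

/-- `λ_m`: the proportion of zeros among `α₁, …, α_m`. -/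
def zeroDensity (α : ℕ → Bool) (m : ℕ) : ℝ :=
  ((Finset.range m).filter fun i => α i = false).card / m

/-!
`F_{α₁…α_k}` is the union of `N_k = ∏_{i<k} #D_{α_i} = 13^{Z_k} 44^{k-Z_k}` grid cubes of
side `5^{-k}` (`Z_k` the number of zeros among `α₁, …, α_k`), and each of them meets `K_α`,
since it contains a scaled copy of `K` for the shifted sequence. The balls of radius `5^{-k}`
around their centres cover `K_α`, while such a ball meets at most `27` grid cubes of side
`5^{-k}`; hence `N_k ≤ 27 N(5^{-k}) ≤ 27 N_k` and
`log N(5^{-k}) / (k log 5) = λ_k log₅ 13 + (1 - λ_k) log₅ 44 + O(1/k)`.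
The right-hand side is an antitone affine function of `λ_k`, so its liminf and limsup are its
values at `limsup λ_k` and `liminf λ_k`.
-/

open Filter Topology

section LiminfLimsup

variable {ι : Type*} {F : Filter ι} [F.NeBot] {u v : ι → ℝ}

lemma limsup_eq_of_tendsto_sub (hv : IsBoundedUnder (· ≤ ·) F v)
    (hv' : IsBoundedUnder (· ≥ ·) F v) (h : Tendsto (u - v) F (𝓝 0)) :
    limsup u F = limsup v F := by
  apply le_antisymm
  · calc limsup u F = limsup (v + (u - v)) F := by rw [add_sub_cancel]
      _ ≤ limsup v F + limsup (u - v) F :=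
        limsup_add_le hv' hv h.isBoundedUnder_ge.isCoboundedUnder_le h.isBoundedUnder_le
      _ = limsup v F := by rw [h.limsup_eq, add_zero]
  · calc limsup v F = limsup v F + liminf (u - v) F := by rw [h.liminf_eq, add_zero]
      _ ≤ limsup (v + (u - v)) F :=
        le_limsup_add hv hv'.isCoboundedUnder_le h.isBoundedUnder_le h.isBoundedUnder_ge
      _ = limsup u F := by rw [add_sub_cancel]

lemma liminf_eq_of_tendsto_sub (hv : IsBoundedUnder (· ≤ ·) F v)
    (hv' : IsBoundedUnder (· ≥ ·) F v) (h : Tendsto (u - v) F (𝓝 0)) :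
    liminf u F = liminf v F := by
  apply le_antisymm
  · calc liminf u F = liminf (u - v + v) F := by rw [sub_add_cancel]
      _ ≤ limsup (u - v) F + liminf v F :=
        liminf_add_le h.isBoundedUnder_ge h.isBoundedUnder_le hv' hv.isCoboundedUnder_ge
      _ = liminf v F := by rw [h.limsup_eq, zero_add]
  · calc liminf v F = liminf v F + liminf (u - v) F := by rw [h.liminf_eq, add_zero]
      _ ≤ liminf (v + (u - v)) F :=
        le_liminf_add hv' hv h.isBoundedUnder_ge h.isBoundedUnder_le.isCoboundedUnder_ge
      _ = liminf u F := by rw [add_sub_cancel]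

end LiminfLimsup

section Covering

open Finset Metric

lemma exists_image_unitCube_subset_ball (p : E 3) {r : ℝ} (hr : 0 < r) :
    ∃ c, (fun u => p + r • u) '' unitCube 3 ⊆ ball c r := by
  refine ⟨p + r • WithLp.toLp 2 fun _ => 1 / 2, ?_⟩
  rintro _ ⟨u, hu, rfl⟩
  rw [mem_ball, dist_add_left, dist_smul₀, Real.norm_eq_abs, abs_of_pos hr]
  refine mul_lt_of_lt_one_right hr ?_
  rw [EuclideanSpace.dist_eq, Real.sqrt_lt' one_pos, Fin.sum_univ_three]
  simp only [Real.dist_eq, sq_abs]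
  have h0 := hu 0
  have h1 := hu 1
  have h2 := hu 2
  nlinarith [mul_nonneg h0.1 (sub_nonneg.2 h0.2), mul_nonneg h1.1 (sub_nonneg.2 h1.2),
    mul_nonneg h2.1 (sub_nonneg.2 h2.2)]

lemma coverNumber_le_card {s : Set (E 3)} {δ : ℝ} {t : Finset (E 3)}
    (h : s ⊆ ⋃ x ∈ t, ball x δ) : coverNumber s δ ≤ #t :=
  Nat.sInf_le ⟨t, rfl, h⟩

lemma exists_card_eq_coverNumber {s : Set (E 3)} {δ : ℝ} {t : Finset (E 3)}
    (h : s ⊆ ⋃ x ∈ t, ball x δ) :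
    ∃ t' : Finset (E 3), #t' = coverNumber s δ ∧ s ⊆ ⋃ x ∈ t', ball x δ :=
  Nat.sInf_mem (s := {m | ∃ t : Finset (E 3), #t = m ∧ s ⊆ ⋃ x ∈ t, ball x δ})
    ⟨_, t, rfl, h⟩

lemma mem_Icc_floor_div_of_abs_lt {δ b t : ℝ} {m : ℤ} (hδ : 0 < δ) (ht : t ∈ Set.Icc 0 1)
    (h : |m * δ + δ * t - b| < δ) : m ∈ Icc (⌊b / δ⌋ - 1) (⌊b / δ⌋ + 1) := by
  obtain ⟨h₁, h₂⟩ := abs_lt.1 h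
  have hup : ⌊b / δ⌋ ≤ m + 1 :=
    Int.floor_le_iff.2 (by rw [div_lt_iff₀ hδ]; push_cast; nlinarith [ht.2])
  have hlow : m - 1 ≤ ⌊b / δ⌋ :=
    Int.le_floor.2 (by rw [le_div_iff₀ hδ]; push_cast; nlinarith [ht.1])
  exact mem_Icc.2 ⟨by omega, by omega⟩

lemma card_le_27_of_cells_meet_ball {δ : ℝ} (hδ : 0 < δ) {s : Finset (E 3)} (c : E 3)
    (hlat : ∀ p ∈ s, ∀ i, ∃ m : ℤ, p i = m * δ)
    (hnear : ∀ p ∈ s, ∃ u ∈ unitCube 3, dist (p + δ • u) c < δ) : #s ≤ 27 := by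
  have hfloor : ∀ p ∈ s, ∀ i, p i = ⌊p i / δ⌋ * δ := by
    intro p hp i
    obtain ⟨m, hm⟩ := hlat p hp i
    rw [hm, mul_div_cancel_right₀ _ hδ.ne', Int.floor_intCast]
  calc #s ≤ #(Fintype.piFinset fun i => Icc (⌊c i / δ⌋ - 1) (⌊c i / δ⌋ + 1)) := by
        refine card_le_card_of_injOn (fun p i => ⌊p i / δ⌋) (fun p hp => ?_) ?_
        · rw [mem_coe, Fintype.mem_piFinset]
          intro i
          obtain ⟨u, hu, hdist⟩ := hnear p hp
          refine mem_Icc_floor_div_of_abs_lt hδ (hu i) ?_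
          rw [← hfloor p hp i]
          simpa [Real.dist_eq] using (PiLp.dist_apply_le _ _ i).trans_lt hdist
        · intro p hp q hq hpq
          ext i
          rw [hfloor p hp i, hfloor q hq i]
          exact congrArg (fun z : ℤ => (z : ℝ) * δ) (congrFun hpq i)
    _ = 27 := by
        simp only [Fintype.card_piFinset, Int.card_Icc,
          show ∀ z : ℤ, (z + 1 + 1 - (z - 1)).toNat = 3 from fun z => by omega]
        rfl

end Covering

section Fword

variable {D : Bool → Set (E 3)}

lemma Ttil_mono (b : Bool) {A B : Set (E 3)} (h : A ⊆ B) : Ttil D b A ⊆ Ttil D b B :=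
  Set.smul_set_mono (Set.add_subset_add_right h)

lemma Ttil_subset_unitCube (hD : ∀ b, D b ⊆ digits 5 3) (b : Bool) {A : Set (E 3)}
    (hA : A ⊆ unitCube 3) : Ttil D b A ⊆ unitCube 3 := by
  rintro _ ⟨_, ⟨a, ha, d, hd, rfl⟩, rfl⟩ i
  obtain ⟨m, hm, hdi⟩ := hD b hd i
  have hai := hA ha i
  have : (m : ℝ) ≤ 4 := by exact_mod_cast Nat.le_of_lt_succ hm
  simp only [PiLp.smul_apply, PiLp.add_apply, smul_eq_mul, hdi, Set.mem_Icc] at hai ⊢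
  constructor <;> nlinarith [hai.1, hai.2]

lemma isCompact_unitCube : IsCompact (unitCube 3) := by
  have : unitCube 3 = WithLp.toLp 2 '' Set.Icc 0 1 := by
    ext x
    refine ⟨fun h => ⟨x.ofLp, ⟨fun i => (h i).1, fun i => (h i).2⟩, rfl⟩, ?_⟩
    rintro ⟨y, hy, rfl⟩ i
    exact ⟨hy.1 i, hy.2 i⟩
  rw [this]
  exact isCompact_Icc.image (PiLp.continuous_toLp 2 _)

lemma Fword_subset_unitCube (hD : ∀ b, D b ⊆ digits 5 3) (w : List Bool) :
    Fword D w ⊆ unitCube 3 := by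
  induction w with
  | nil => exact le_rfl
  | cons b w ih => exact Ttil_subset_unitCube hD b ih

lemma foldr_Ttil_mono (w : List Bool) {A B : Set (E 3)} (h : A ⊆ B) :
    w.foldr (Ttil D) A ⊆ w.foldr (Ttil D) B := by
  induction w with
  | nil => exact h
  | cons b w ih => exact Ttil_mono b ih

lemma Fword_append_subset (hD : ∀ b, D b ⊆ digits 5 3) (w v : List Bool) :
    Fword D (w ++ v) ⊆ Fword D w := by
  rw [Fword, List.foldr_append]
  exact foldr_Ttil_mono w (Fword_subset_unitCube hD v)

lemma isCompact_Fword (hc : ∀ b, IsCompact (D b)) (w : List Bool) : IsCompact (Fword D w) := by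
  induction w with
  | nil => exact isCompact_unitCube
  | cons b w ih => exact (ih.add (hc b)).smul _

lemma Fword_nonempty (hne : ∀ b, (D b).Nonempty) (w : List Bool) : (Fword D w).Nonempty := by
  induction w with
  | nil => exact ⟨0, fun i => by simp⟩
  | cons b w ih => exact (ih.add (hne b)).smul_set

lemma prefixList_add (α : ℕ → Bool) (k j : ℕ) :
    prefixList α (k + j) = prefixList α k ++ prefixList (fun n => α (k + n)) j :=
  List.ofFn_add

lemma length_prefixList (α : ℕ → Bool) (k : ℕ) : (prefixList α k).length = k :=
  List.length_ofFn

lemma Kset_subset_Fword_prefixList (hD : ∀ b, D b ⊆ digits 5 3) (α : ℕ → Bool) :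
    ∀ k, Kset D α ⊆ Fword D (prefixList α k)
  | 0 => (Set.iInter_subset _ 0).trans (Fword_subset_unitCube hD _)
  | k + 1 => Set.iInter_subset _ k

lemma Kset_nonempty (hD : ∀ b, D b ⊆ digits 5 3) (hc : ∀ b, IsCompact (D b))
    (hne : ∀ b, (D b).Nonempty) (α : ℕ → Bool) : (Kset D α).Nonempty := by
  refine IsCompact.nonempty_iInter_of_sequence_nonempty_isCompact_isClosed _ (fun k => ?_)
    (fun _ => Fword_nonempty hne _) (isCompact_Fword hc _)
    (fun _ => (isCompact_Fword hc _).isClosed)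
  rw [prefixList_add α (k + 1) 1]
  exact Fword_append_subset hD _ _

end Fword

section ZeroDensity

open Finset

lemma zeroDensity_mem_Icc (α : ℕ → Bool) (k : ℕ) : zeroDensity α k ∈ Set.Icc 0 1 := by
  refine ⟨by unfold zeroDensity; positivity, div_le_one_of_le₀ ?_ (Nat.cast_nonneg _)⟩
  exact_mod_cast (card_filter_le _ _).trans (card_range k).le

lemma sum_range_comp_eq_zeroDensity (α : ℕ → Bool) (f : Bool → ℝ) {k : ℕ}
    (hk : k ≠ 0) :
    ∑ i ∈ range k, f (α i) =
      k * (zeroDensity α k * f false + (1 - zeroDensity α k) * f true) := by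
  have hsplit := card_filter_add_card_filter_not (s := range k) (fun i => α i = false)
  rw [card_range] at hsplit
  rw [← sum_filter_add_sum_filter_not (range k) (fun i => α i = false),
    sum_congr rfl fun i hi => congrArg f (mem_filter.1 hi).2,
    sum_congr rfl fun i hi => congrArg f (Bool.eq_true_of_not_eq_false (mem_filter.1 hi).2),
    sum_const, sum_const, nsmul_eq_mul, nsmul_eq_mul, zeroDensity]
  have hk' : (k : ℝ) ≠ 0 := Nat.cast_ne_zero.2 hk
  have hcast : (#((range k).filter fun i => ¬α i = false) : ℝ) =
      k - #((range k).filter fun i => α i = false) := by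
    rw [eq_sub_iff_add_eq, add_comm]
    exact_mod_cast hsplit
  rw [hcast]
  field_simp

end ZeroDensity

section BoxCounting

open Finset Metric

variable {D : Bool → Finset (E 3)}

lemma natCast_eq_of_add_eq_add {m n : ℕ} {x y : ℝ} (hx : x ∈ Set.Ico 0 1)
    (hy : y ∈ Set.Ico 0 1) (h : m + x = n + y) : m = n := by
  have hmn : m < n + 1 := by exact_mod_cast (show (m : ℝ) < n + 1 by linarith [hx.1, hy.2])
  have hnm : n < m + 1 := by exact_mod_cast (show (n : ℝ) < m + 1 by linarith [hx.2, hy.1])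
  omega

def cellCorners (D : Bool → Finset (E 3)) : List Bool → Finset (E 3)
  | [] => {0}
  | b :: w => (D b ×ˢ cellCorners D w).image fun q => (5 : ℝ)⁻¹ • (q.1 + q.2)

lemma foldr_Ttil_eq_biUnion (w : List Bool) (S : Set (E 3)) :
    w.foldr (Ttil fun b => D b) S =
      ⋃ p ∈ cellCorners D w, (fun x => p + (5 : ℝ)⁻¹ ^ w.length • x) '' S := by
  induction w with
  | nil => simp [cellCorners]
  | cons b w ih =>
    rw [List.foldr_cons, ih, Ttil]
    ext x
    simp only [cellCorners, Set.mem_smul_set, Set.mem_add, Set.mem_iUnion, Set.mem_image,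
      mem_image, mem_product, Prod.exists, mem_coe, exists_prop, List.length_cons, pow_succ]
    constructor
    · rintro ⟨_, ⟨_, ⟨p, hp, u, hu, rfl⟩, d, hd, rfl⟩, rfl⟩
      exact ⟨_, ⟨d, p, ⟨hd, hp⟩, rfl⟩, u, hu, by module⟩
    · rintro ⟨_, ⟨d, p, ⟨hd, hp⟩, rfl⟩, u, hu, rfl⟩
      exact ⟨_, ⟨_, ⟨p, hp, u, hu, rfl⟩, d, hd, rfl⟩, by module⟩

lemma Fword_eq_biUnion (w : List Bool) :
    Fword (fun b => D b) w =
      ⋃ p ∈ cellCorners D w, (fun x => p + (5 : ℝ)⁻¹ ^ w.length • x) '' unitCube 3 :=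
  foldr_Ttil_eq_biUnion w _

lemma Fword_append_eq_biUnion (w v : List Bool) :
    Fword (fun b => D b) (w ++ v) =
      ⋃ p ∈ cellCorners D w,
        (fun x => p + (5 : ℝ)⁻¹ ^ w.length • x) '' Fword (fun b => D b) v := by
  rw [Fword, List.foldr_append]
  exact foldr_Ttil_eq_biUnion w _

lemma exists_coord_eq_of_mem_cellCorners (hD : ∀ b, ↑(D b) ⊆ digits 5 3) {w : List Bool}
    {p : E 3} (hp : p ∈ cellCorners D w) (i : Fin 3) :
    ∃ m : ℕ, m < 5 ^ w.length ∧ p i = m / 5 ^ w.length := by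
  induction w generalizing p with
  | nil =>
    rw [cellCorners, mem_singleton] at hp
    exact ⟨0, by simp, by simp [hp]⟩
  | cons b w ih =>
    simp only [cellCorners, mem_image, mem_product, Prod.exists] at hp
    obtain ⟨d, q, ⟨hd, hq⟩, rfl⟩ := hp
    obtain ⟨a, ha, hda⟩ := hD b hd i
    obtain ⟨m, hm, hqm⟩ := ih hq
    refine ⟨5 ^ w.length * a + m, ?_, ?_⟩
    · rw [List.length_cons, pow_succ]
      nlinarith
    · simp only [PiLp.smul_apply, PiLp.add_apply, smul_eq_mul, hda, hqm, List.length_cons]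
      push_cast
      field_simp
      ring

lemma coord_mem_Ico_of_mem_cellCorners (hD : ∀ b, ↑(D b) ⊆ digits 5 3) {w : List Bool}
    {p : E 3} (hp : p ∈ cellCorners D w) (i : Fin 3) : p i ∈ Set.Ico 0 1 := by
  obtain ⟨m, hm, hpm⟩ := exists_coord_eq_of_mem_cellCorners hD hp i
  rw [hpm]
  have hm' : (m : ℝ) < 5 ^ w.length := by exact_mod_cast hm
  exact ⟨by positivity, (div_lt_one (by positivity)).2 hm'⟩

lemma card_cellCorners (hD : ∀ b, ↑(D b) ⊆ digits 5 3) (w : List Bool) :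
    #(cellCorners D w) = (w.map fun b => #(D b)).prod := by
  induction w with
  | nil => rfl
  | cons b w ih =>
    rw [cellCorners, card_image_of_injOn, card_product, ih, List.map_cons, List.prod_cons]
    rintro ⟨d, p⟩ hdp ⟨d', p'⟩ hdp' h
    simp only [coe_product, Set.mem_prod, mem_coe] at hdp hdp'
    have hsum : d + p = d' + p' := smul_right_injective _ (by norm_num) h
    have hdd : d = d' := by
      ext i
      obtain ⟨a, -, ha⟩ := hD b hdp.1 i
      obtain ⟨a', -, ha'⟩ := hD b hdp'.1 i
      have hi : (a : ℝ) + p i = a' + p' i := by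
        rw [← ha, ← ha']; exact congrArg (fun x : E 3 => x i) hsum
      rw [ha, ha', natCast_eq_of_add_eq_add (coord_mem_Ico_of_mem_cellCorners hD hdp.2 i)
        (coord_mem_Ico_of_mem_cellCorners hD hdp'.2 i) hi]
    subst hdd
    rw [add_left_cancel hsum]

lemma cellCorners_nonempty (hne : ∀ b, (D b).Nonempty) : ∀ w, (cellCorners D w).Nonempty
  | [] => singleton_nonempty 0
  | b :: w => ((hne b).product (cellCorners_nonempty hne w)).image _

lemma add_smul_mem_Kset (hD : ∀ b, ↑(D b) ⊆ digits 5 3) {α : ℕ → Bool} {k : ℕ}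
    {p y : E 3} (hp : p ∈ cellCorners D (prefixList α k))
    (hy : y ∈ Kset (fun b => D b) fun n => α (k + n)) :
    p + (5 : ℝ)⁻¹ ^ k • y ∈ Kset (fun b => D b) α := by
  refine Set.mem_iInter.2 fun j => ?_
  have hx : p + (5 : ℝ)⁻¹ ^ k • y ∈
      Fword (fun b => D b) (prefixList α (k + (j + 1))) := by
    rw [prefixList_add, Fword_append_eq_biUnion, length_prefixList]
    exact Set.mem_biUnion hp ⟨y, Set.mem_iInter.1 hy j, rfl⟩
  rw [add_comm k, prefixList_add] at hx
  exact Fword_append_subset hD _ _ hx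

lemma exists_add_smul_mem_Kset (hD : ∀ b, ↑(D b) ⊆ digits 5 3) (hne : ∀ b, (D b).Nonempty)
    {α : ℕ → Bool} {k : ℕ} {p : E 3} (hp : p ∈ cellCorners D (prefixList α k)) :
    ∃ u ∈ unitCube 3, p + (5 : ℝ)⁻¹ ^ k • u ∈ Kset (fun b => D b) α := by
  obtain ⟨y, hy⟩ := Kset_nonempty hD (fun b => (D b).finite_toSet.isCompact)
    (fun b => coe_nonempty.2 (hne b)) fun n => α (k + n)
  exact ⟨y, Kset_subset_Fword_prefixList hD _ 0 hy, add_smul_mem_Kset hD hp hy⟩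

lemma exists_cover_Kset (hD : ∀ b, ↑(D b) ⊆ digits 5 3) (α : ℕ → Bool) (k : ℕ) :
    ∃ t : Finset (E 3), #t ≤ #(cellCorners D (prefixList α k)) ∧
      Kset (fun b => D b) α ⊆ ⋃ x ∈ t, ball x ((5 : ℝ)⁻¹ ^ k) := by
  choose c hc using fun p =>
    exists_image_unitCube_subset_ball p (by positivity : (0 : ℝ) < 5⁻¹ ^ k)
  refine ⟨(cellCorners D (prefixList α k)).image c, card_image_le, fun x hx => ?_⟩
  have hx' := Kset_subset_Fword_prefixList hD α k hx
  rw [Fword_eq_biUnion, length_prefixList] at hx'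
  obtain ⟨p, hp, hxp⟩ := Set.mem_iUnion₂.1 hx'
  exact Set.mem_iUnion₂.2 ⟨c p, mem_image_of_mem c hp, hc p hxp⟩

lemma one_div_five_pow (k : ℕ) : (1 : ℝ) / 5 ^ k = 5⁻¹ ^ k := by
  rw [one_div, inv_pow]

lemma coverNumber_Kset_le (hD : ∀ b, ↑(D b) ⊆ digits 5 3) (α : ℕ → Bool) (k : ℕ) :
    coverNumber (Kset (fun b => D b) α) (1 / 5 ^ k) ≤ #(cellCorners D (prefixList α k)) := by
  obtain ⟨t, ht, hcover⟩ := exists_cover_Kset hD α k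
  rw [one_div_five_pow]
  exact (coverNumber_le_card hcover).trans ht

lemma card_cellCorners_le_mul_coverNumber (hD : ∀ b, ↑(D b) ⊆ digits 5 3)
    (hne : ∀ b, (D b).Nonempty) (α : ℕ → Bool) (k : ℕ) :
    #(cellCorners D (prefixList α k)) ≤
      27 * coverNumber (Kset (fun b => D b) α) (1 / 5 ^ k) := by
  classical
  set C := cellCorners D (prefixList α k)
  set δ : ℝ := 5⁻¹ ^ k
  set near : E 3 → E 3 → Prop := fun c p => ∃ u ∈ unitCube 3, dist (p + δ • u) c < δ
  have hδ : 0 < δ := by positivity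
  obtain ⟨t₀, -, ht₀⟩ := exists_cover_Kset hD α k
  obtain ⟨t, ht, hcover⟩ := exists_card_eq_coverNumber ht₀
  rw [one_div_five_pow, ← ht]
  have hnear : ∀ p ∈ C, ∃ c ∈ t, near c p := by
    intro p hp
    obtain ⟨u, hu, hK⟩ := exists_add_smul_mem_Kset hD hne hp
    obtain ⟨c, hc, hdist⟩ := Set.mem_iUnion₂.1 (hcover hK)
    exact ⟨c, hc, u, hu, hdist⟩
  have hlat : ∀ p ∈ C, ∀ i, ∃ m : ℤ, p i = m * δ := by
    intro p hp i
    obtain ⟨m, -, hm⟩ := exists_coord_eq_of_mem_cellCorners hD hp i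
    refine ⟨m, ?_⟩
    rw [hm, length_prefixList, Int.cast_natCast, div_eq_mul_inv, ← inv_pow]
  calc #C ≤ #(t.biUnion fun c => C.filter (near c)) := by
        refine card_le_card fun p hp => ?_
        obtain ⟨c, hc, hpc⟩ := hnear p hp
        exact mem_biUnion.2 ⟨c, hc, mem_filter.2 ⟨hp, hpc⟩⟩
    _ ≤ ∑ c ∈ t, #(C.filter (near c)) := card_biUnion_le
    _ ≤ #t • 27 := sum_le_card_nsmul _ _ _ fun c _ =>
        card_le_27_of_cells_meet_ball hδ c (fun p hp => hlat p (mem_filter.1 hp).1)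
          (fun p hp => (mem_filter.1 hp).2)
    _ = 27 * #t := by rw [smul_eq_mul, mul_comm]

lemma log_card_cellCorners_div (hD : ∀ b, ↑(D b) ⊆ digits 5 3) (hne : ∀ b, (D b).Nonempty)
    (α : ℕ → Bool) {k : ℕ} (hk : k ≠ 0) :
    Real.log #(cellCorners D (prefixList α k)) / (k * Real.log 5) =
      zeroDensity α k * Real.logb 5 #(D false) +
        (1 - zeroDensity α k) * Real.logb 5 #(D true) := by
  have hpos : ∀ b, (#(D b) : ℝ) ≠ 0 := fun b => Nat.cast_ne_zero.2 (hne b).card_pos.ne'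
  rw [card_cellCorners hD, prefixList, List.map_ofFn, List.prod_ofFn]
  simp only [Function.comp_apply]
  rw [Fin.prod_univ_eq_prod_range (fun i => #(D (α i))), Nat.cast_prod,
    Real.log_prod fun i _ => hpos (α i),
    sum_range_comp_eq_zeroDensity α (fun b => Real.log #(D b)) hk]
  have : Real.log 5 ≠ 0 := (Real.log_pos (by norm_num)).ne'
  simp only [Real.logb]
  field_simp

lemma abs_log_coverNumber_sub_log_card_le (hD : ∀ b, ↑(D b) ⊆ digits 5 3)
    (hne : ∀ b, (D b).Nonempty) (α : ℕ → Bool) (k : ℕ) :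
    |Real.log (coverNumber (Kset (fun b => D b) α) (1 / 5 ^ k)) -
      Real.log #(cellCorners D (prefixList α k))| ≤ Real.log 27 := by
  set N := coverNumber (Kset (fun b => D b) α) (1 / 5 ^ k)
  set C := cellCorners D (prefixList α k)
  have hC : (0 : ℝ) < #C := mod_cast (cellCorners_nonempty hne _).card_pos
  have hup : (N : ℝ) ≤ #C := Nat.cast_le.2 (coverNumber_Kset_le hD α k)
  have hlow : (#C : ℝ) ≤ 27 * N :=
    (Nat.cast_le.2 (card_cellCorners_le_mul_coverNumber hD hne α k)).trans_eq
      (by rw [Nat.cast_mul, Nat.cast_ofNat])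
  have hN : (0 : ℝ) < N := by linarith
  rw [abs_sub_le_iff]
  constructor
  · linarith [Real.log_le_log hN hup, Real.log_nonneg (by norm_num : (1 : ℝ) ≤ 27)]
  · linarith [Real.log_le_log hC hlow, Real.log_mul (by norm_num : (27 : ℝ) ≠ 0) hN.ne']

lemma tendsto_log_coverNumber_div_sub (hD : ∀ b, ↑(D b) ⊆ digits 5 3)
    (hne : ∀ b, (D b).Nonempty) (α : ℕ → Bool) :
    Tendsto (fun k : ℕ => Real.log (coverNumber (Kset (fun b => D b) α) (1 / 5 ^ k)) /
        (k * Real.log 5) -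
      (zeroDensity α k * Real.logb 5 #(D false) + (1 - zeroDensity α k) * Real.logb 5 #(D true)))
      atTop (𝓝 0) := by
  refine squeeze_zero_norm' ?_ (tendsto_const_div_atTop_nhds_zero_nat (Real.log 27 / Real.log 5))
  filter_upwards [eventually_ne_atTop 0] with k hk
  have hk' : (0 : ℝ) < k * Real.log 5 := by positivity
  rw [← log_card_cellCorners_div hD hne α hk, ← sub_div, norm_div, Real.norm_eq_abs,
    Real.norm_of_nonneg hk'.le, div_div, mul_comm (Real.log 5)]
  exact div_le_div_of_nonneg_right (abs_log_coverNumber_sub_log_card_le hD hne α k) hk'.le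

theorem Kset_lowerBoxDim_upperBoxDim (hD : ∀ b, ↑(D b) ⊆ digits 5 3)
    (hne : ∀ b, (D b).Nonempty) (hcard : #(D false) ≤ #(D true)) (α : ℕ → Bool) :
    lowerBoxDim (Kset (fun b => D b) α) =
        limsup (zeroDensity α) atTop * Real.logb 5 #(D false) +
          (1 - limsup (zeroDensity α) atTop) * Real.logb 5 #(D true) ∧
      upperBoxDim (Kset (fun b => D b) α) =
        liminf (zeroDensity α) atTop * Real.logb 5 #(D false) +
          (1 - liminf (zeroDensity α) atTop) * Real.logb 5 #(D true) := by
  set φ : ℝ → ℝ := fun t => t * Real.logb 5 #(D false) + (1 - t) * Real.logb 5 #(D true)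
  have hlogb : Real.logb 5 #(D false) ≤ Real.logb 5 #(D true) :=
    Real.logb_le_logb_of_le (by norm_num) (mod_cast (hne false).card_pos) (mod_cast hcard)
  have hφ : Antitone φ := fun s t hst => by simp only [φ]; nlinarith
  have hφc : Continuous φ := by fun_prop
  have hz := zeroDensity_mem_Icc α
  have hza : IsBoundedUnder (· ≤ ·) atTop (zeroDensity α) :=
    isBoundedUnder_of ⟨1, fun k => (hz k).2⟩
  have hzb : IsBoundedUnder (· ≥ ·) atTop (zeroDensity α) :=
    isBoundedUnder_of ⟨0, fun k => (hz k).1⟩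
  have hφa : IsBoundedUnder (· ≤ ·) atTop (φ ∘ zeroDensity α) :=
    isBoundedUnder_of ⟨φ 0, fun k => hφ (hz k).1⟩
  have hφb : IsBoundedUnder (· ≥ ·) atTop (φ ∘ zeroDensity α) :=
    isBoundedUnder_of ⟨φ 1, fun k => hφ (hz k).2⟩
  have hclose := tendsto_log_coverNumber_div_sub hD hne α
  exact ⟨(liminf_eq_of_tendsto_sub hφa hφb hclose).trans
      (hφ.map_limsup_of_continuousAt _ hφc.continuousAt hza hzb.isCoboundedUnder_le).symm,
    (limsup_eq_of_tendsto_sub hφa hφb hclose).trans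
      (hφ.map_liminf_of_continuousAt _ hφc.continuousAt hza.isCoboundedUnder_ge hzb).symm⟩

end BoxCounting

section PaperDigits

open Finset

def gridPoint (t : ℕ × ℕ × ℕ) : E 3 :=
  WithLp.toLp 2 ![(t.1 : ℝ), (t.2.1 : ℝ), (t.2.2 : ℝ)]

lemma gridPoint_injective : Function.Injective gridPoint := by
  rintro ⟨a, b, c⟩ ⟨a', b', c'⟩ h
  have h' := congrArg WithLp.ofLp h
  simp only [gridPoint, Matrix.vecCons_inj, Nat.cast_inj, and_true] at h'
  obtain ⟨rfl, rfl, rfl⟩ := h'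
  rfl

lemma coe_image_gridPoint_subset_digits {s : Finset (ℕ × ℕ × ℕ)}
    (hs : s ⊆ range 5 ×ˢ range 5 ×ˢ range 5) :
    ↑(s.image gridPoint) ⊆ digits 5 3 := by
  intro x hx
  obtain ⟨⟨a, b, c⟩, ht, rfl⟩ := mem_image.1 hx
  have hlt := hs ht
  simp only [mem_product, mem_range] at hlt
  obtain ⟨ha, hb, hc⟩ := hlt
  intro i
  fin_cases i
  exacts [⟨a, ha, rfl⟩, ⟨b, hb, rfl⟩, ⟨c, hc, rfl⟩]

def crossFinset : Finset (E 3) :=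
  ((range 5 ×ˢ range 5 ×ˢ range 5).filter fun t =>
      (t.1 = 2 ∧ t.2.1 = 2) ∨ (t.1 = 2 ∧ t.2.2 = 2) ∨ (t.2.1 = 2 ∧ t.2.2 = 2)).image
    gridPoint

def frameFinset : Finset (E 3) :=
  ((range 5 ×ˢ range 5 ×ˢ range 5).filter fun t =>
    (t.1 ∈ ({0, 4} : Finset ℕ) ∧ t.2.1 ∈ ({0, 4} : Finset ℕ)) ∨
    (t.1 ∈ ({0, 4} : Finset ℕ) ∧ t.2.2 ∈ ({0, 4} : Finset ℕ)) ∨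
    (t.2.1 ∈ ({0, 4} : Finset ℕ) ∧ t.2.2 ∈ ({0, 4} : Finset ℕ))).image gridPoint

lemma card_crossFinset : #crossFinset = 13 := by
  rw [crossFinset, card_image_of_injective _ gridPoint_injective]; decide

lemma card_frameFinset : #frameFinset = 44 := by
  rw [frameFinset, card_image_of_injective _ gridPoint_injective]; decide

lemma coe_crossFinset : (crossFinset : Set (E 3)) = crossD := by
  ext x
  simp only [crossFinset, crossD, gridPoint, coe_image, coe_filter, mem_product, mem_range,
    Nat.lt_succ_iff, Set.mem_image, Set.mem_ofPred_eq, Prod.exists, WithLp.ext_iff]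
  constructor
  · rintro ⟨a, b, c, ⟨⟨ha, hb, hc⟩, ⟨rfl, rfl⟩ | ⟨rfl, rfl⟩ | ⟨rfl, rfl⟩⟩,
      hx⟩
    exacts [⟨c, hc, Or.inl hx.symm⟩, ⟨b, hb, Or.inr (Or.inl hx.symm)⟩,
      ⟨a, ha, Or.inr (Or.inr hx.symm)⟩]
  · rintro ⟨j, hj, hx | hx | hx⟩
    · exact ⟨2, 2, j, by simp [hj], hx.symm⟩
    · exact ⟨2, j, 2, by simp [hj], hx.symm⟩
    · exact ⟨j, 2, 2, by simp [hj], hx.symm⟩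

lemma coe_frameFinset : (frameFinset : Set (E 3)) = frameD := by
  ext x
  simp only [frameFinset, frameD, gridPoint, coe_image, coe_filter, mem_product, mem_range,
    Nat.lt_succ_iff, Set.mem_image, Set.mem_ofPred_eq, Prod.exists, WithLp.ext_iff, mem_insert,
    mem_singleton, Set.mem_insert_iff, Set.mem_singleton_iff]
  constructor
  · rintro ⟨a, b, c, ⟨⟨ha, hb, hc⟩, hP⟩, hx⟩
    exact ⟨a, b, c, ha, hb, hc, hx.symm, hP⟩
  · rintro ⟨a, b, c, ha, hb, hc, hx, hP⟩
    exact ⟨a, b, c, ⟨⟨ha, hb, hc⟩, hP⟩, hx.symm⟩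

def paperFinset (b : Bool) : Finset (E 3) := if b then frameFinset else crossFinset

lemma coe_paperFinset : (fun b => (paperFinset b : Set (E 3))) = paperD := by
  funext b
  cases b
  exacts [coe_crossFinset, coe_frameFinset]

lemma paperFinset_subset_digits (b : Bool) : ↑(paperFinset b) ⊆ digits 5 3 := by
  cases b
  exacts [coe_image_gridPoint_subset_digits (filter_subset _ _),
    coe_image_gridPoint_subset_digits (filter_subset _ _)]

lemma card_paperFinset (b : Bool) : #(paperFinset b) = if b then 44 else 13 := by
  cases b
  exacts [card_crossFinset, card_frameFinset]

lemma paperFinset_nonempty (b : Bool) : (paperFinset b).Nonempty := by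
  rw [← card_pos, card_paperFinset]
  cases b <;> norm_num

end PaperDigits

/-- With `λ̄ = limsup λ_m` and `λ̲ = liminf λ_m`, the lower box dimension
of `K_α` is `λ̄·log₅13 + (1-λ̄)·log₅44` and the upper box dimension is
`λ̲·log₅13 + (1-λ̲)·log₅44`. -/
theorem Kset_box_dimensions (α : ℕ → Bool) :
    lowerBoxDim (Kset paperD α) =
        Filter.limsup (zeroDensity α) Filter.atTop * Real.logb 5 13 +
          (1 - Filter.limsup (zeroDensity α) Filter.atTop) * Real.logb 5 44 ∧
      upperBoxDim (Kset paperD α) =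
        Filter.liminf (zeroDensity α) Filter.atTop * Real.logb 5 13 +
          (1 - Filter.liminf (zeroDensity α) Filter.atTop) * Real.logb 5 44 := by
  have h := Kset_lowerBoxDim_upperBoxDim paperFinset_subset_digits paperFinset_nonempty
    (by simp only [card_paperFinset]; norm_num) α
  simpa only [coe_paperFinset, card_paperFinset, Bool.false_eq_true, if_true, if_false,
    Nat.cast_ofNat] using h
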